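/- arXiv:1410.6596 — 5 statements merged into one kernel-verified Lean document; each statement's English description precedes it below -/
import Mathlib

section
/- For any nonempty set X and any multivalued map F : X → Set X, the set of fixed points of F equals the intersection, over all covers (O_ι)_{ι∈I} of X (families of subsets with ⋃_ι O_ι = X), of the unions ⋃_{ι∈I} F̂(O_ι). That is, Fix(F) = ⋂_{covers (O_ι)} ⋃_ι F̂(O_ι). -/
open Set

section

variable {X : Type*}

/-- The paper's `F̂(Y)`. -/
def imageWithin (F : X → Set X) (Y : Set X) : Set X :=
  (⋃ y ∈ Y, F y) ∩ Y

theorem mem_imageWithin_of_mem_self {F : X → Set X} {Y : Set X} {x : X} (hx : x ∈ F x)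
    (hY : x ∈ Y) : x ∈ imageWithin F Y :=
  ⟨mem_biUnion hY hx, hY⟩

theorem mem_imageWithin_singleton_self {F : X → Set X} {x : X} :
    x ∈ imageWithin F {x} ↔ x ∈ F x := by
  simp [imageWithin]

theorem sUnion_singleton_compl (x : X) : ⋃₀ ({{x}, {x}ᶜ} : Set (Set X)) = univ := by
  rw [sUnion_pair, union_compl_self]

theorem setOf_mem_self_subset_iUnion_imageWithin {F : X → Set X} {C : Set (Set X)}
    (hC : ⋃₀ C = univ) : {x | x ∈ F x} ⊆ ⋃ O ∈ C, imageWithin F O := by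
  intro x hx
  obtain ⟨O, hO, hxO⟩ : x ∈ ⋃₀ C := hC ▸ mem_univ x
  exact mem_biUnion hO (mem_imageWithin_of_mem_self hx hxO)

theorem mem_self_of_mem_iUnion_imageWithin_singleton_compl {F : X → Set X} {x : X}
    (hx : x ∈ ⋃ O ∈ ({{x}, {x}ᶜ} : Set (Set X)), imageWithin F O) : x ∈ F x := by
  simp only [mem_iUnion, exists_prop, mem_insert_iff, mem_singleton_iff] at hx
  obtain ⟨O, rfl | rfl, hxO⟩ := hx
  · exact mem_imageWithin_singleton_self.1 hxO
  · exact absurd hxO.2 (notMem_compl_iff.2 rfl)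

end

theorem fix_eq_iInter_covers_general (X : Type*) (F : X → Set X) :
    {x | x ∈ F x} =
      ⋂ C ∈ {C : Set (Set X) | ⋃₀ C = Set.univ}, ⋃ O ∈ C, (⋃ y ∈ O, F y) ∩ O := by
  refine Subset.antisymm (subset_iInter₂ fun C hC => ?_) fun x hx => ?_
  · exact setOf_mem_self_subset_iUnion_imageWithin hC
  · exact mem_self_of_mem_iUnion_imageWithin_singleton_compl
      (mem_iInter₂.1 hx _ (sUnion_singleton_compl x))

theorem fix_eq_iInter_covers (X : Type*) [Nonempty X] (F : X → Set X) :
    {x | x ∈ F x} =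
      ⋂ C ∈ {C : Set (Set X) | ⋃₀ C = Set.univ}, ⋃ O ∈ C, (⋃ y ∈ O, F y) ∩ O :=
  fix_eq_iInter_covers_general X F
end

section
/- Let X be a compact Hausdorff topological space and F : X → Set X a multivalued map with closed graph (i.e., {(x,y) | y ∈ F(x)} is closed in X × X). Then Fix(F) = ⋂ ⋃_{ι∈I} F̂(O_ι), where the intersection is taken over all finite open covers (O_ι)_{ι∈I} of X. -/
/-!
Every fixed point `x ∈ F x` lies in `F̂(O)` for the member `O` of the cover containing it. Conversely,
if `x ∉ F x`, closedness of the graph gives an open `W ∋ x` with `W ×ˢ W` missing the graph, so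
`F̂(W) = ∅`; on the cover `{W, {x}ᶜ}` the point `x` then lies in no `F̂(O)`.
-/

open Set

section

variable {X : Type*}

theorem mem_biUnion_biUnion_inter_of_mem_of_sUnion_eq_univ {F : X → Set X} {C : Set (Set X)}
    (hC : ⋃₀ C = univ) {x : X} (hx : x ∈ F x) : x ∈ ⋃ O ∈ C, (⋃ y ∈ O, F y) ∩ O := by
  obtain ⟨O, hO, hxO⟩ := mem_sUnion.1 (hC ▸ mem_univ x)
  exact mem_biUnion hO ⟨mem_biUnion hxO hx, hxO⟩

theorem exists_isOpen_biUnion_inter_eq_empty_of_isClosed_graph [TopologicalSpace X]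
    {F : X → Set X} (hF : IsClosed {p : X × X | p.2 ∈ F p.1}) {x : X} (hx : x ∉ F x) :
    ∃ W, IsOpen W ∧ x ∈ W ∧ (⋃ y ∈ W, F y) ∩ W = ∅ := by
  obtain ⟨U, V, hU, hV, hxU, hxV, hUV⟩ := isOpen_prod_iff.1 hF.isOpen_compl x x hx
  refine ⟨U ∩ V, hU.inter hV, ⟨hxU, hxV⟩, eq_empty_of_forall_notMem ?_⟩
  rintro z ⟨hz, -, hzV⟩
  obtain ⟨y, ⟨hyU, -⟩, hzy⟩ := mem_iUnion₂.1 hz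
  exact hUV (mk_mem_prod hyU hzV) hzy

theorem pair_compl_singleton_mem_finite_open_covers [TopologicalSpace X] [T1Space X]
    {W : Set X} (hW : IsOpen W) {x : X} (hxW : x ∈ W) :
    ({W, {x}ᶜ} : Set (Set X)) ∈
      {C : Set (Set X) | C.Finite ∧ (∀ O ∈ C, IsOpen O) ∧ ⋃₀ C = univ} := by
  refine ⟨(finite_singleton _).insert _, ?_, ?_⟩
  · rintro O (rfl | rfl)
    exacts [hW, isOpen_compl_singleton]
  · rw [sUnion_pair, ← compl_subset_iff_union, compl_subset_compl, singleton_subset_iff]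
    exact hxW

theorem notMem_biUnion_pair_compl_singleton {F : X → Set X} {W : Set X}
    (hW : (⋃ y ∈ W, F y) ∩ W = ∅) (x : X) :
    x ∉ ⋃ O ∈ ({W, {x}ᶜ} : Set (Set X)), (⋃ y ∈ O, F y) ∩ O := by
  rw [biUnion_pair, hW, empty_union]
  exact fun hx => hx.2 rfl

end

theorem fix_eq_iInter_finite_open_covers_general (X : Type*) [TopologicalSpace X]
    [T2Space X] (F : X → Set X)
    (hF : IsClosed {p : X × X | p.2 ∈ F p.1}) :
    {x | x ∈ F x} =
      ⋂ C ∈ {C : Set (Set X) | C.Finite ∧ (∀ O ∈ C, IsOpen O) ∧ ⋃₀ C = Set.univ},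
        ⋃ O ∈ C, (⋃ y ∈ O, F y) ∩ O := by
  ext x
  refine ⟨fun hx => mem_iInter₂.2 fun C hC =>
    mem_biUnion_biUnion_inter_of_mem_of_sUnion_eq_univ hC.2.2 hx, fun hx => ?_⟩
  by_contra hxF
  obtain ⟨W, hWo, hxW, hW⟩ := exists_isOpen_biUnion_inter_eq_empty_of_isClosed_graph hF hxF
  exact notMem_biUnion_pair_compl_singleton hW x
    (mem_iInter₂.1 hx _ (pair_compl_singleton_mem_finite_open_covers hWo hxW))

theorem fix_eq_iInter_finite_open_covers (X : Type*) [TopologicalSpace X]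
    [CompactSpace X] [T2Space X] (F : X → Set X)
    (hF : IsClosed {p : X × X | p.2 ∈ F p.1}) :
    {x | x ∈ F x} =
      ⋂ C ∈ {C : Set (Set X) | C.Finite ∧ (∀ O ∈ C, IsOpen O) ∧ ⋃₀ C = Set.univ},
        ⋃ O ∈ C, (⋃ y ∈ O, F y) ∩ O :=
  fix_eq_iInter_finite_open_covers_general X F hF
end

section
/- Let X be a compact Hausdorff topological space and F : X → Set X a multivalued map with closed graph. Then Fix(F) is nonempty if and only if for every finite closed cover (O_ι)_{ι∈I} of X there exists ι with F̂(O_ι) ≠ ∅, i.e., there exist x, x' ∈ O_ι with x' ∈ F(x). -/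
/-!
If `F` has no fixed point, each `(x, x)` lies in the open complement of the graph, so by
regularity `x` has a closed neighbourhood `K` with `K ×ˢ K` missing the graph, i.e. `F̂(K) = ∅`.
Compactness extracts finitely many such `K` covering `X`.
-/

open Set Filter Topology

section ClosedRelation

variable {X : Type*} [TopologicalSpace X]

theorem exists_isClosed_mem_nhds_disjoint_prod_self [RegularSpace X] {S : Set (X × X)}
    (hS : IsClosed S) {x : X} (hx : (x, x) ∉ S) :
    ∃ K ∈ 𝓝 x, IsClosed K ∧ Disjoint (K ×ˢ K) S := by
  have hSc : Sᶜ ∈ 𝓝 x ×ˢ 𝓝 x := by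
    rw [← nhds_prod_eq]
    exact hS.isOpen_compl.mem_nhds hx
  obtain ⟨K, ⟨hK, hKc⟩, hKS⟩ := (closed_nhds_basis x).prod_self.mem_iff.mp hSc
  exact ⟨K, hK, hKc, subset_compl_iff_disjoint_right.mp hKS⟩

theorem exists_finite_isClosed_cover_of_forall_mem_nhds [CompactSpace X] {P : Set X → Prop}
    (h : ∀ x, ∃ K ∈ 𝓝 x, IsClosed K ∧ P K) :
    ∃ C : Set (Set X), C.Finite ∧ (∀ O ∈ C, IsClosed O ∧ P O) ∧ ⋃₀ C = univ := by
  choose K hK hKc hP using h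
  obtain ⟨t, ht⟩ := CompactSpace.elim_nhds_subcover K hK
  refine ⟨K '' t, t.finite_toSet.image K, ?_, by rwa [sUnion_image]⟩
  rintro _ ⟨a, -, rfl⟩
  exact ⟨hKc a, hP a⟩

end ClosedRelation

theorem fix_nonempty_iff_finite_closed_covers (X : Type*) [TopologicalSpace X]
    [CompactSpace X] [T2Space X] (F : X → Set X)
    (hF : IsClosed {p : X × X | p.2 ∈ F p.1}) :
    {x | x ∈ F x}.Nonempty ↔
      ∀ C : Set (Set X), C.Finite → (∀ O ∈ C, IsClosed O) → ⋃₀ C = Set.univ →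
        ∃ O ∈ C, ∃ x ∈ O, ∃ x' ∈ O, x' ∈ F x := by
  constructor
  · rintro ⟨x, hx⟩ C - - hcov
    obtain ⟨O, hO, hxO⟩ := sUnion_eq_univ_iff.mp hcov x
    exact ⟨O, hO, x, hxO, x, hxO, hx⟩
  · contrapose!
    intro hfix
    have hfix' : ∀ x, x ∉ F x := eq_empty_iff_forall_notMem.mp hfix
    obtain ⟨C, hCfin, hC, hcov⟩ := exists_finite_isClosed_cover_of_forall_mem_nhds
      fun x => exists_isClosed_mem_nhds_disjoint_prod_self hF (hfix' x)
    refine ⟨C, hCfin, fun O hO => (hC O hO).1, hcov, ?_⟩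
    intro O hO x hx x' hx' hxx'
    exact disjoint_left.mp (hC O hO).2 (mk_mem_prod hx hx') hxx'
end

section
/- Let X be a compact Hausdorff space and f : X → X a continuous function. Then f has a fixed point if and only if for every finite closed cover (O_ι)_{ι∈I} of X there exists an index ι and points x, x' ∈ O_ι with f(x) = x'. -/
/-! Without a fixed point, every point has a closed neighbourhood `K` with `f '' K` disjoint from
`K` (separate `x` from `f x`, pull back by `f`, shrink by regularity); by compactness finitely many
of these cover `X`, and this cover violates the condition. -/

open Filter Set Topology

theorem exists_isClosed_mem_nhds_disjoint_image {X : Type*} [TopologicalSpace X] [T2Space X]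
    [RegularSpace X] {f : X → X} {x : X} (hf : ContinuousAt f x) (hx : f x ≠ x) :
    ∃ K ∈ 𝓝 x, IsClosed K ∧ Disjoint (f '' K) K := by
  have hdisj : Disjoint (map f (𝓝 x)) (𝓝 x) := (disjoint_nhds_nhds.2 hx).mono_left hf
  obtain ⟨K₁, ⟨hK₁, hK₁c⟩, K₂, ⟨hK₂, hK₂c⟩, hK⟩ :=
    ((closed_nhds_basis x).map f).disjoint_iff (closed_nhds_basis x) |>.1 hdisj
  refine ⟨K₁ ∩ K₂, inter_mem hK₁ hK₂, hK₁c.inter hK₂c, ?_⟩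
  exact (hK.mono_left (image_mono inter_subset_left)).mono_right inter_subset_right

theorem exists_finite_sUnion_eq_univ_of_forall_exists_mem_nhds {X : Type*}
    [TopologicalSpace X] [CompactSpace X] {p : Set X → Prop} (h : ∀ x, ∃ s ∈ 𝓝 x, p s) :
    ∃ C : Set (Set X), C.Finite ∧ (∀ s ∈ C, p s) ∧ ⋃₀ C = univ := by
  choose U hU hpU using h
  obtain ⟨t, ht⟩ := CompactSpace.elim_nhds_subcover U hU
  refine ⟨U '' t, t.finite_toSet.image U, forall_mem_image.2 fun x _ => hpU x, ?_⟩
  rwa [sUnion_image]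

theorem fixedPoint_iff_finite_closed_covers (X : Type*) [TopologicalSpace X]
    [CompactSpace X] [T2Space X] (f : X → X) (hf : Continuous f) :
    (∃ x, f x = x) ↔
      ∀ C : Set (Set X), C.Finite → (∀ O ∈ C, IsClosed O) → ⋃₀ C = Set.univ →
        ∃ O ∈ C, ∃ x ∈ O, ∃ x' ∈ O, f x = x' := by
  constructor
  · rintro ⟨x, hx⟩ C - - hC
    obtain ⟨O, hO, hxO⟩ := mem_sUnion.1 (hC ▸ mem_univ x)
    exact ⟨O, hO, x, hxO, x, hxO, hx⟩
  · intro h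
    by_contra! hfix
    obtain ⟨C, hCfin, hCp, hCcov⟩ :=
      exists_finite_sUnion_eq_univ_of_forall_exists_mem_nhds
        (p := fun K => IsClosed K ∧ Disjoint (f '' K) K)
        fun x => exists_isClosed_mem_nhds_disjoint_image hf.continuousAt (hfix x)
    obtain ⟨O, hO, x, hxO, -, hfxO, rfl⟩ := h C hCfin (fun O hO => (hCp O hO).1) hCcov
    exact (hCp O hO).2.ne_of_mem (mem_image_of_mem f hxO) hfxO rfl
end

section
/- Let X be a compact metric space, F : X → Set X a map with closed graph, and for each k ∈ ℕ let (O_{kι})_{ι∈I_k} be a finite cover of X by closed (or open) sets each of diameter at most δ_k, where δ_k > 0 and δ_k → 0. Then Fix(F) = ⋂_{k∈ℕ} ⋃_{ι∈I_k} F̂(O_{kι}). -/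
open Filter Topology Set

theorem subset_iUnion_biUnion_inter_of_iUnion_eq_univ {X ι : Type*} {F : X → Set X}
    {U : ι → Set X} (hU : ⋃ i, U i = univ) :
    {x | x ∈ F x} ⊆ ⋃ i, (⋃ y ∈ U i, F y) ∩ U i := by
  intro x hx
  obtain ⟨i, hi⟩ := mem_iUnion.mp (hU ▸ mem_univ x)
  exact mem_iUnion.mpr ⟨i, mem_biUnion hi hx, hi⟩

theorem mem_of_isClosed_graph_of_tendsto {X ι : Type*} [TopologicalSpace X] {F : X → Set X}
    (hF : IsClosed {p : X × X | p.2 ∈ F p.1}) {l : Filter ι} [l.NeBot] {y z : ι → X} {a b : X}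
    (hy : Tendsto y l (𝓝 a)) (hz : Tendsto z l (𝓝 b)) (hyz : ∀ᶠ k in l, z k ∈ F (y k)) :
    b ∈ F a :=
  hF.mem_of_tendsto (hy.prodMk_nhds hz) hyz

-- `hs` is needed since `Metric.diam` is `0` on unbounded sets.
theorem tendsto_of_mem_of_diam_le {X : Type*} [PseudoMetricSpace X] {s : ℕ → Set X}
    {δ : ℕ → ℝ} (hδ : Tendsto δ atTop (𝓝 0)) (hs : ∀ k, Bornology.IsBounded (s k))
    (hdiam : ∀ k, Metric.diam (s k) ≤ δ k) {x : X} (hx : ∀ k, x ∈ s k) {y : ℕ → X}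
    (hy : ∀ k, y k ∈ s k) : Tendsto y atTop (𝓝 x) := by
  have hdist : ∀ k, dist (y k) x ≤ δ k := fun k =>
    (Metric.dist_le_diam_of_mem (hs k) (hy k) (hx k)).trans (hdiam k)
  rw [tendsto_iff_dist_tendsto_zero]
  exact squeeze_zero (fun _ => dist_nonneg) hdist hδ

theorem fix_eq_iInter_small_covers_general (X : Type*) [MetricSpace X] [CompactSpace X]
    (F : X → Set X) (hF : IsClosed {p : X × X | p.2 ∈ F p.1})
    (I : ℕ → Type*) (O : (k : ℕ) → I k → Set X) (δ : ℕ → ℝ)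
    (hδ : Filter.Tendsto δ Filter.atTop (nhds 0))
    (hcov : ∀ k, ⋃ i, O k i = Set.univ)
    (hdiam : ∀ k, ∀ i, Metric.diam (O k i) ≤ δ k) :
    {x | x ∈ F x} = ⋂ k : ℕ, ⋃ i : I k, (⋃ y ∈ O k i, F y) ∩ O k i := by
  refine Subset.antisymm
    (subset_iInter fun k => subset_iUnion_biUnion_inter_of_iUnion_eq_univ (hcov k)) ?_
  intro x hx
  simp only [mem_iInter, mem_iUnion, mem_inter_iff] at hx
  choose i hFO hxO using hx
  choose y hyO hxF using hFO
  have hy : Tendsto y atTop (𝓝 x) :=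
    tendsto_of_mem_of_diam_le hδ (fun k => Metric.isBounded_of_compactSpace)
      (fun k => hdiam k (i k)) hxO hyO
  exact mem_of_isClosed_graph_of_tendsto hF hy tendsto_const_nhds (Eventually.of_forall hxF)

theorem fix_eq_iInter_small_covers (X : Type*) [MetricSpace X] [CompactSpace X]
    (F : X → Set X) (hF : IsClosed {p : X × X | p.2 ∈ F p.1})
    (I : ℕ → Type*) [∀ k, Finite (I k)] (O : (k : ℕ) → I k → Set X) (δ : ℕ → ℝ)
    (hδpos : ∀ k, 0 < δ k)
    (hδ : Filter.Tendsto δ Filter.atTop (nhds 0))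
    (hcov : ∀ k, ⋃ i, O k i = Set.univ)
    (hoc : ∀ k, (∀ i, IsClosed (O k i)) ∨ (∀ i, IsOpen (O k i)))
    (hdiam : ∀ k, ∀ i, Metric.diam (O k i) ≤ δ k) :
    {x | x ∈ F x} = ⋂ k : ℕ, ⋃ i : I k, (⋃ y ∈ O k i, F y) ∩ O k i :=
  fix_eq_iInter_small_covers_general X F hF I O δ hδ hcov hdiam
end
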